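/- Let Φ be a 3CNF formula and let Δ'(Φ)=(D'(Φ),W'(Φ)) be the cyclic NU default theory described in the context. For every R ⊆ W'(Φ): if there exists an extension E of (D'(Φ),W'(Φ)_R) such that the letter f belongs to E, then for each literal ℓ ∈ R \ {¬l}, (D'(Φ),W'(Φ)_R) ⊭ ¬ℓ. -/

import Mathlib

/-! Propositional formulas -/

inductive Form (V : Type) : Type
  | atom : V → Form V
  | tru  : Form V
  | fals : Form V
  | neg  : Form V → Form V
  | conj : Form V → Form V → Form V
  | disj : Form V → Form V → Form V

/-- Satisfaction of a formula by a valuation. -/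
def Form.sat {V : Type} (v : V → Prop) : Form V → Prop
  | .atom a => v a
  | .tru => True
  | .fals => False
  | .neg φ => ¬ Form.sat v φ
  | .conj φ ψ => Form.sat v φ ∧ Form.sat v ψ
  | .disj φ ψ => Form.sat v φ ∨ Form.sat v ψ

/-- Logical logClosure `T*` of a set of formulas. -/
def logClosure {V : Type} (T : Set (Form V)) : Set (Form V) :=
  { φ | ∀ v : V → Prop, (∀ ψ ∈ T, Form.sat v ψ) → Form.sat v φ }

/-- A default rule `α : β₁,…,β_m / γ` (`pre = none` means the prerequisite is missing). -/
structure Default (V : Type) : Type where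
  pre   : Option (Form V)
  justs : List (Form V)
  concl : Form V

/-- The stage sets `E_i` relative to a candidate extension `E`:
`E_0 = W`, `E_{i+1} = E_i* ∪ {γ | α:β₁,…,β_m/γ ∈ D, α ∈ E_i, ¬β₁ ∉ E, …, ¬β_m ∉ E}`. -/
def extStage {V : Type} (D : Set (Default V)) (W : Set (Form V)) (E : Set (Form V)) :
    ℕ → Set (Form V)
  | 0 => W
  | i + 1 =>
      logClosure (extStage D W E i) ∪
        { φ | ∃ d ∈ D, d.concl = φ ∧ (∀ a ∈ d.pre, a ∈ extStage D W E i) ∧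
              ∀ b ∈ d.justs, Form.neg b ∉ E }

/-- `E` is an extension of the default theory `(D, W)`. -/
def IsExtension {V : Type} (D : Set (Default V)) (W : Set (Form V)) (E : Set (Form V)) : Prop :=
  E = ⋃ i, extStage D W E i

/-- `(D, W) ⊨ φ`: every extension of `(D, W)` contains `φ`. -/
def entails {V : Type} (D : Set (Default V)) (W : Set (Form V)) (φ : Form V) : Prop :=
  ∀ E, IsExtension D W E → φ ∈ E

/-! Literals -/

/-- A literal: a letter together with a sign (`pos = true` means a positive literal). -/
structure Lit (V : Type) : Type where
  letter : V
  pos : Bool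

/-- The formula corresponding to a literal. -/
def Lit.toForm {V : Type} (l : Lit V) : Form V :=
  if l.pos then Form.atom l.letter else Form.neg (Form.atom l.letter)

/-- Negation of a literal (so that `¬¬a = a`). -/
def Lit.negate {V : Type} (l : Lit V) : Lit V := ⟨l.letter, !l.pos⟩

/-- A set of literals is consistent if it contains no complementary pair. -/
def LitConsistent {V : Type} (S : Set (Lit V)) : Prop := ∀ l ∈ S, l.negate ∉ S

/-! Normal mixed unary (NMU) default theories -/

/-- An NMU default `α : β / β` with `α` empty or a single literal and `β` a single literal. -/
structure NMUDefault (V : Type) : Type where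
  pre : Option (Lit V)
  concl : Lit V

/-- The general default rule corresponding to an NMU default. -/
def NMUDefault.toDefault {V : Type} (d : NMUDefault V) : Default V :=
  ⟨d.pre.map Lit.toForm, [d.concl.toForm], d.concl.toForm⟩

/-- `E` is an extension of the NMU theory `(D, W)`. -/
def NMU.IsExtension {V : Type} (D : Set (NMUDefault V)) (W : Set (Lit V))
    (E : Set (Form V)) : Prop :=
  _root_.IsExtension (NMUDefault.toDefault '' D) (Lit.toForm '' W) E

/-- The NMU theory `(D, W)` entails the literal `l`. -/
def NMU.entails {V : Type} (D : Set (NMUDefault V)) (W : Set (Lit V)) (l : Lit V) : Prop :=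
  _root_.entails (NMUDefault.toDefault '' D) (Lit.toForm '' W) l.toForm

/-- An NMU theory is normal unary (NU) if every nonempty prerequisite is positive. -/
def IsNU {V : Type} (D : Set (NMUDefault V)) : Prop :=
  ∀ d ∈ D, ∀ p ∈ d.pre, p.pos = true

/-! Atomic dependency graph -/

/-- Edge `(x, y)` of the atomic dependency graph: `x` occurs in the prerequisite and `y`
in the consequent of some default of `D`. -/
def depEdge {V : Type} (D : Set (NMUDefault V)) (x y : V) : Prop :=
  ∃ d ∈ D, (∃ p ∈ d.pre, p.letter = x) ∧ d.concl.letter = y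

/-- There is a path from `x` to `y` in the atomic dependency graph. -/
def depReach {V : Type} (D : Set (NMUDefault V)) : V → V → Prop :=
  Relation.ReflTransGen (depEdge D)

/-- A set of literals `S` influences a literal `l`. -/
def influences {V : Type} (D : Set (NMUDefault V)) (S : Set (Lit V)) (l : Lit V) : Prop :=
  ∃ t ∈ S, depReach D t.letter l.letter

/-- A 3CNF formula over variables `Fin n` with `m` conjuncts is represented by the
function giving the `k`-th literal of the `j`-th clause. -/
def Sat3 {n m : ℕ} (Φ : Fin m → Fin 3 → Lit (Fin n)) : Prop :=
  ∃ τ : Fin n → Bool, ∀ j : Fin m, ∃ k : Fin 3, τ (Φ j k).letter = (Φ j k).pos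

/-- The letters of the cyclic theory `Δ'(Φ)`: the variables `xᵢ`, the fresh letters `yᵢ`,
`c_j` (`j = 1, …, m`), `f` and `l`. -/
inductive PhiVar (n m : ℕ) : Type
  | X : Fin n → PhiVar n m
  | Y : Fin n → PhiVar n m
  | C : Fin m → PhiVar n m
  | F : PhiVar n m
  | L : PhiVar n m

/-- `σ(xᵢ) = xᵢ` and `σ(¬xᵢ) = yᵢ`. -/
def sigmaMap {n m : ℕ} (t : Lit (Fin n)) : Lit (PhiVar n m) :=
  if t.pos then ⟨PhiVar.X t.letter, true⟩ else ⟨PhiVar.Y t.letter, true⟩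

/-- `D'(Φ) = D₁ ∪ D₂ ∪ D₃ ∪ D₄ ∪ D₅ ∪ D₆`, where
`D₁ = {xᵢ:¬yᵢ/¬yᵢ, :yᵢ/yᵢ}`, `D₂ = {σ(t_{j,k}):¬c_j/¬c_j}`, `D₃ = {:¬xᵢ/¬xᵢ}`,
`D₄ = {f:xᵢ/xᵢ}`, `D₅ = {c_j:f/f, f:c_j/c_j}` and `D₆ = {:l/l, l:f/f}`. -/
def DPhi' {n m : ℕ} (Φ : Fin m → Fin 3 → Lit (Fin n)) : Set (NMUDefault (PhiVar n m)) :=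
  { d | (∃ i, d = ⟨some ⟨PhiVar.X i, true⟩, ⟨PhiVar.Y i, false⟩⟩) ∨
        (∃ i, d = ⟨none, ⟨PhiVar.Y i, true⟩⟩) ∨
        (∃ j k, d = ⟨some (sigmaMap (Φ j k)), ⟨PhiVar.C j, false⟩⟩) ∨
        (∃ i, d = ⟨none, ⟨PhiVar.X i, false⟩⟩) ∨
        (∃ i, d = ⟨some ⟨PhiVar.F, true⟩, ⟨PhiVar.X i, true⟩⟩) ∨
        (∃ j, d = ⟨some ⟨PhiVar.C j, true⟩, ⟨PhiVar.F, true⟩⟩) ∨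
        (∃ j, d = ⟨some ⟨PhiVar.F, true⟩, ⟨PhiVar.C j, true⟩⟩) ∨
        d = ⟨none, ⟨PhiVar.L, true⟩⟩ ∨
        d = ⟨some ⟨PhiVar.L, true⟩, ⟨PhiVar.F, true⟩⟩ }

/-- `W'(Φ) = {x₁, …, xₙ} ∪ {¬l, c₁, …, c_m}`. -/
def WPhi' (n m : ℕ) : Set (Lit (PhiVar n m)) :=
  { l | (∃ i, l = ⟨PhiVar.X i, true⟩) ∨ l = ⟨PhiVar.L, false⟩ ∨
        ∃ j, l = ⟨PhiVar.C j, true⟩ }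

/-! If `¬l` and every `c_j` were removed from `W'(Φ)`, no extension `E` could contain `f`: the
valuation making true exactly the letters `xᵢ`, `yᵢ` that lie in `E` satisfies `W'(Φ)_R` and
every default applicable in `E`, hence all of `E`, but falsifies `f`. So one of them is kept,
and it grounds `f`; then the set of formulas true under the valuation making every letter true
except `l` (true iff `¬l` was removed) is an extension, and it contains no `¬xᵢ` and no `¬c_j`. -/

section DefaultLogic

variable {V : Type}

def theoryOf (v : V → Prop) : Set (Form V) := { φ | φ.sat v }

theorem Form.sat_congr {v w : V → Prop} (h : ∀ a, v a ↔ w a) (φ : Form V) :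
    φ.sat v ↔ φ.sat w := by
  induction φ with
  | atom a => exact h a
  | tru | fals => exact Iff.rfl
  | neg φ ih => exact not_congr ih
  | conj φ ψ ihφ ihψ => exact and_congr ihφ ihψ
  | disj φ ψ ihφ ihψ => exact or_congr ihφ ihψ

theorem theoryOf_subset_logClosure {v : V → Prop} {T : Set (Form V)}
    (hT : ∀ ℓ : Lit V, ℓ.toForm.sat v → ℓ.toForm ∈ T) : theoryOf v ⊆ logClosure T := by
  intro φ hφ w hw
  have hvw : ∀ a, v a ↔ w a := fun a => by
    by_cases ha : v a
    · exact iff_of_true ha (hw _ (hT ⟨a, true⟩ ha))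
    · exact iff_of_false ha (hw _ (hT ⟨a, false⟩ ha))
  exact (Form.sat_congr hvw φ).mp hφ

variable {D : Set (Default V)} {W E : Set (Form V)}

theorem extStage_mono : Monotone (extStage D W E) :=
  monotone_nat_of_le_succ fun _ _ h => Or.inl fun _ hv => hv _ h

theorem sat_of_mem_extStage {v : V → Prop} (hW : ∀ φ ∈ W, φ.sat v)
    (hD : ∀ d ∈ D, (∀ b ∈ d.justs, Form.neg b ∉ E) → (∀ a ∈ d.pre, a.sat v) → d.concl.sat v) :
    ∀ i, ∀ φ ∈ extStage D W E i, φ.sat v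
  | 0 => hW
  | i + 1 => by
    rintro φ (hφ | ⟨d, hd, rfl, hpre, hj⟩)
    · exact hφ v (sat_of_mem_extStage hW hD i)
    · exact hD d hd hj fun a ha => sat_of_mem_extStage hW hD i a (hpre a ha)

theorem isExtension_theoryOf {v : V → Prop} (hW : ∀ φ ∈ W, φ.sat v)
    (hD : ∀ d ∈ D, (∀ b ∈ d.justs, b.sat v) → (∀ a ∈ d.pre, a.sat v) → d.concl.sat v) {k : ℕ}
    (hk : theoryOf v ⊆ logClosure (extStage D W (theoryOf v) k)) :
    IsExtension D W (theoryOf v) := by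
  refine Set.Subset.antisymm (fun φ hφ => Set.mem_iUnion.mpr ⟨k + 1, Or.inl (hk hφ)⟩) ?_
  refine Set.iUnion_subset fun i => sat_of_mem_extStage hW (fun d hd hj => hD d hd ?_) i
  exact fun b hb => not_not.mp (hj b hb)

namespace IsExtension

theorem extStage_subset (hE : IsExtension D W E) (k : ℕ) : extStage D W E k ⊆ E := by
  intro φ h
  rw [hE]
  exact Set.mem_iUnion.mpr ⟨k, h⟩

theorem exists_mem_extStage (hE : IsExtension D W E) {φ : Form V} (h : φ ∈ E) :
    ∃ k, φ ∈ extStage D W E k := by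
  rw [hE] at h
  exact Set.mem_iUnion.mp h

theorem neg_neg_mem (hE : IsExtension D W E) {φ : Form V} (h : φ ∈ E) :
    Form.neg (Form.neg φ) ∈ E := by
  obtain ⟨k, hk⟩ := hE.exists_mem_extStage h
  exact hE.extStage_subset (k + 1) (Or.inl fun _ hv hn => hn (hv _ hk))

theorem sat_of_mem (hE : IsExtension D W E) {v : V → Prop} (hW : ∀ φ ∈ W, φ.sat v)
    (hD : ∀ d ∈ D, (∀ b ∈ d.justs, Form.neg b ∉ E) → (∀ a ∈ d.pre, a.sat v) → d.concl.sat v)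
    {φ : Form V} (h : φ ∈ E) : φ.sat v :=
  let ⟨k, hk⟩ := hE.exists_mem_extStage h
  sat_of_mem_extStage hW hD k φ hk

end IsExtension

end DefaultLogic

namespace NMU

variable {V : Type} {D : Set (NMUDefault V)} {W : Set (Lit V)} {E : Set (Form V)}

theorem mem_extStage_succ {d : NMUDefault V} (hd : d ∈ D) {k : ℕ}
    (hpre : ∀ p ∈ d.pre, p.toForm ∈ extStage (NMUDefault.toDefault '' D) (Lit.toForm '' W) E k)
    (hj : Form.neg d.concl.toForm ∉ E) :
    d.concl.toForm ∈ extStage (NMUDefault.toDefault '' D) (Lit.toForm '' W) E (k + 1) :=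
  Or.inr ⟨d.toDefault, ⟨d, hd, rfl⟩, rfl, Option.forall_mem_map.mpr hpre,
    List.forall_mem_singleton.mpr hj⟩

theorem IsExtension.toForm_mem (hE : NMU.IsExtension D W E) {ℓ : Lit V} (h : ℓ ∈ W) :
    ℓ.toForm ∈ E :=
  _root_.IsExtension.extStage_subset hE 0 ⟨ℓ, h, rfl⟩

theorem IsExtension.concl_mem (hE : NMU.IsExtension D W E) {d : NMUDefault V} (hd : d ∈ D)
    (hpre : ∀ p ∈ d.pre, p.toForm ∈ E) (hj : Form.neg d.concl.toForm ∉ E) :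
    d.concl.toForm ∈ E := by
  obtain ⟨k, hk⟩ : ∃ k, ∀ p ∈ d.pre,
      p.toForm ∈ extStage (NMUDefault.toDefault '' D) (Lit.toForm '' W) E k := by
    cases h : d.pre with
    | none => exact ⟨0, by simp⟩
    | some p =>
      obtain ⟨k, hk⟩ := _root_.IsExtension.exists_mem_extStage hE (hpre p h)
      exact ⟨k, by simpa using hk⟩
  exact _root_.IsExtension.extStage_subset hE (k + 1) (mem_extStage_succ hd hk hj)

theorem IsExtension.sat_of_mem (hE : NMU.IsExtension D W E) {v : V → Prop}
    (hW : ∀ ℓ ∈ W, ℓ.toForm.sat v)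
    (hD : ∀ d ∈ D, Form.neg d.concl.toForm ∉ E → (∀ p ∈ d.pre, p.toForm.sat v) →
      d.concl.toForm.sat v)
    {φ : Form V} (h : φ ∈ E) : φ.sat v := by
  refine _root_.IsExtension.sat_of_mem hE (by simpa using hW) ?_ h
  rintro _ ⟨d, hd, rfl⟩ hj hpre
  exact hD d hd (hj _ (List.mem_singleton_self _)) (Option.forall_mem_map.mp hpre)

/-- For normal defaults the justification is the consequent, so the default condition of
`isExtension_theoryOf` holds for every valuation. -/
theorem isExtension_theoryOf {v : V → Prop} (hW : ∀ ℓ ∈ W, ℓ.toForm.sat v) {k : ℕ}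
    (hk : ∀ ℓ : Lit V, ℓ.toForm.sat v →
      ℓ.toForm ∈ extStage (NMUDefault.toDefault '' D) (Lit.toForm '' W) (theoryOf v) k) :
    NMU.IsExtension D W (theoryOf v) := by
  refine _root_.isExtension_theoryOf (by simpa using hW) ?_ (theoryOf_subset_logClosure hk)
  rintro _ ⟨d, -, rfl⟩ hj -
  exact hj _ (List.mem_singleton_self _)

end NMU

section CyclicTheory

variable {n m : ℕ} {Φ : Fin m → Fin 3 → Lit (Fin n)} {R : Set (Lit (PhiVar n m))}

theorem atom_F_not_mem_of_isExtension (hL : (⟨PhiVar.L, false⟩ : Lit (PhiVar n m)) ∉ R)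
    (hC : ∀ j, (⟨PhiVar.C j, true⟩ : Lit (PhiVar n m)) ∈ R) {E : Set (Form (PhiVar n m))}
    (hE : NMU.IsExtension (DPhi' Φ) (WPhi' n m \ R) E) : Form.atom PhiVar.F ∉ E := by
  let v : PhiVar n m → Prop
    | .X i => Form.atom (PhiVar.X i) ∈ E
    | .Y i => Form.atom (PhiVar.Y i) ∈ E
    | _ => False
  have hnotL : Form.neg (Form.atom PhiVar.L) ∈ E := hE.toForm_mem ⟨Or.inr (Or.inl rfl), hL⟩
  have hW : ∀ ℓ ∈ WPhi' n m \ R, ℓ.toForm.sat v := by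
    rintro ℓ ⟨hℓW, hℓR⟩
    rcases hℓW with ⟨i, rfl⟩ | rfl | ⟨j, rfl⟩
    · exact hE.toForm_mem ⟨Or.inl ⟨i, rfl⟩, hℓR⟩
    · exact not_false
    · exact absurd (hC j) hℓR
  have hD : ∀ d ∈ DPhi' Φ, Form.neg d.concl.toForm ∉ E →
      (∀ p ∈ d.pre, p.toForm.sat v) → d.concl.toForm.sat v := by
    intro d hd hj hpre
    rcases id hd with ⟨i, rfl⟩ | ⟨i, rfl⟩ | ⟨j, k, rfl⟩ | ⟨i, rfl⟩ | ⟨i, rfl⟩ | ⟨j, rfl⟩ |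
      ⟨j, rfl⟩ | rfl | rfl
    · exact fun hY => hj (_root_.IsExtension.neg_neg_mem hE hY)
    · exact hE.concl_mem hd (by simp) hj
    · exact not_false
    · exact fun hX => hj (_root_.IsExtension.neg_neg_mem hE hX)
    · exact (hpre _ rfl).elim
    · exact (hpre _ rfl).elim
    · exact (hpre _ rfl).elim
    · exact absurd hnotL hj
    · exact (hpre _ rfl).elim
  exact hE.sat_of_mem hW hD

def witnessValuation (R : Set (Lit (PhiVar n m))) : PhiVar n m → Prop
  | .L => (⟨PhiVar.L, false⟩ : Lit (PhiVar n m)) ∈ R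
  | _ => True

theorem isExtension_theoryOf_witnessValuation
    (hground : (⟨PhiVar.L, false⟩ : Lit (PhiVar n m)) ∈ R ∨
      ∃ j, (⟨PhiVar.C j, true⟩ : Lit (PhiVar n m)) ∉ R) :
    NMU.IsExtension (DPhi' Φ) (WPhi' n m \ R) (theoryOf (witnessValuation R)) := by
  set S := extStage (NMUDefault.toDefault '' DPhi' Φ) (Lit.toForm '' (WPhi' n m \ R))
    (theoryOf (witnessValuation R))
  have fire : ∀ d ∈ DPhi' Φ, d.concl.toForm.sat (witnessValuation R) →
      ∀ k, (∀ p ∈ d.pre, p.toForm ∈ S k) → d.concl.toForm ∈ S (k + 1) :=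
    fun d hd hv k hpre => NMU.mem_extStage_succ hd hpre (not_not_intro hv)
  have hl : (⟨PhiVar.L, false⟩ : Lit (PhiVar n m)) ∈ R → Form.atom PhiVar.L ∈ S 1 :=
    fun hL => fire ⟨none, ⟨PhiVar.L, true⟩⟩ (by simp [DPhi']) hL 0 (by simp)
  have hF : Form.atom PhiVar.F ∈ S 2 := by
    rcases hground with hL | ⟨j, hC⟩
    · exact fire ⟨some ⟨PhiVar.L, true⟩, ⟨PhiVar.F, true⟩⟩ (by simp [DPhi']) trivial 1
        (by simpa [Lit.toForm] using hl hL)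
    · refine extStage_mono (by norm_num) (fire ⟨some ⟨PhiVar.C j, true⟩, ⟨PhiVar.F, true⟩⟩
        (by simp [DPhi']) trivial 0 ?_)
      simpa using ⟨⟨PhiVar.C j, true⟩, ⟨by simp [WPhi'], hC⟩, rfl⟩
  refine NMU.isExtension_theoryOf (k := 3) ?_ ?_
  · rintro ℓ ⟨hℓW, hℓR⟩
    rcases hℓW with ⟨i, rfl⟩ | rfl | ⟨j, rfl⟩
    · trivial
    · exact hℓR
    · trivial
  · rintro ⟨a | a | a | _ | _, _ | _⟩ hℓ
    · exact (hℓ trivial).elim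
    · exact fire ⟨some ⟨PhiVar.F, true⟩, ⟨PhiVar.X a, true⟩⟩ (by simp [DPhi']) trivial 2
        (by simpa [Lit.toForm] using hF)
    · exact (hℓ trivial).elim
    · exact extStage_mono (by norm_num)
        (fire ⟨none, ⟨PhiVar.Y a, true⟩⟩ (by simp [DPhi']) trivial 0 (by simp))
    · exact (hℓ trivial).elim
    · exact fire ⟨some ⟨PhiVar.F, true⟩, ⟨PhiVar.C a, true⟩⟩ (by simp [DPhi']) trivial 2
        (by simpa [Lit.toForm] using hF)
    · exact (hℓ trivial).elim
    · exact extStage_mono (by norm_num) hF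
    · exact extStage_mono (by norm_num : 0 ≤ 3) ⟨_, ⟨by simp [WPhi'], hℓ⟩, rfl⟩
    · exact extStage_mono (by norm_num) (hl hℓ)

end CyclicTheory

/-- For every `R ⊆ W'(Φ)`: if some extension `E` of `(D'(Φ), W'(Φ)_R)` contains the letter
`f`, then for each literal `ℓ ∈ R \ {¬l}`, `(D'(Φ), W'(Φ)_R) ⊭ ¬ℓ`. -/
theorem f_in_extension_claim {n m : ℕ} (Φ : Fin m → Fin 3 → Lit (Fin n))
    (R : Set (Lit (PhiVar n m))) (hR : R ⊆ WPhi' n m)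
    (hf : ∃ E, NMU.IsExtension (DPhi' Φ) (WPhi' n m \ R) E ∧
      Lit.toForm (⟨PhiVar.F, true⟩ : Lit (PhiVar n m)) ∈ E) :
    ∀ l ∈ R, l ≠ (⟨PhiVar.L, false⟩ : Lit (PhiVar n m)) →
      ¬ NMU.entails (DPhi' Φ) (WPhi' n m \ R) l.negate := by
  obtain ⟨E, hE, hfE⟩ := hf
  have hground : (⟨PhiVar.L, false⟩ : Lit (PhiVar n m)) ∈ R ∨
      ∃ j, (⟨PhiVar.C j, true⟩ : Lit (PhiVar n m)) ∉ R := by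
    by_contra! h
    exact atom_F_not_mem_of_isExtension h.1 h.2 hE hfE
  intro l hlR hl hentails
  have hmem := hentails _ (isExtension_theoryOf_witnessValuation (Φ := Φ) hground)
  rcases hR hlR with ⟨i, rfl⟩ | rfl | ⟨j, rfl⟩
  · exact hmem trivial
  · exact hl rfl
  · exact hmem trivial
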